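/- arXiv:2106.13074 — 6 statements merged into one kernel-verified Lean document; each statement's English description precedes it below -/
import Mathlib

section
/- Let E and F be compact convex subsets of a finite-dimensional real inner product space V. Suppose a compact group Γ ⊆ O(V) preserves both E and F, and F is an exposed face of E. Then the cone C_F = {u ∈ V : F = F_u(E)} contains a fixed point of Γ, i.e. there exists u with F = F_u(E) and g·u = u for all g ∈ Γ. -/
/-!
The set of vectors exposing `F` is invariant under `Γ`, since each `ρ g` is an isometry
preserving `E` and `F`. Averaging the orbit of one exposing vector `u` against Haar measure gives
a `Γ`-fixed vector `w` with `⟪x, w⟫ = ∫ ⟪x, ρ g u⟫ dg`, so `⟪·, w⟫` is maximised on `E` exactly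
where every `⟪·, ρ g u⟫` is. For the inclusion `F_w(E) ⊆ F`, compare a maximiser `x` of `⟪·, w⟫`
with a point `y ∈ F`: the continuous functions `g ↦ ⟪x, ρ g u⟫ ≤ ⟪y, ρ g u⟫` have equal Haar
integrals, and Haar measure charges every nonempty open set, so they agree everywhere.
-/

/-- The exposed face of `E` defined by `u`. -/
def exposedFace {V : Type*} [NormedAddCommGroup V] [InnerProductSpace ℝ V]
    (E : Set V) (u : V) : Set V :=
  {x ∈ E | (inner ℝ x u : ℝ) = sSup ((fun y => (inner ℝ y u : ℝ)) '' E)}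

open MeasureTheory
open scoped RealInnerProductSpace

theorem Continuous.eq_of_le_of_integral_le {X : Type*} [TopologicalSpace X] [MeasurableSpace X]
    [OpensMeasurableSpace X] {μ : Measure X} [μ.IsOpenPosMeasure] {f g : X → ℝ}
    (hf : Continuous f) (hg : Continuous g) (hfi : Integrable f μ) (hgi : Integrable g μ)
    (hfg : f ≤ g) (hint : ∫ x, g x ∂μ ≤ ∫ x, f x ∂μ) : f = g := by
  have hzero : ∫ x, (g - f) x ∂μ = 0 :=
    le_antisymm (by rw [Pi.sub_def, integral_sub hgi hfi]; linarith)
      (integral_nonneg fun x => sub_nonneg.2 (hfg x))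
  have hae : g - f =ᵐ[μ] 0 :=
    (integral_eq_zero_iff_of_nonneg (fun x => sub_nonneg.2 (hfg x)) (hgi.sub hfi)).1 hzero
  exact (sub_eq_zero.1 (((hg.sub hf).ae_eq_iff_eq μ continuous_const).1 hae)).symm

section ExposedFace

variable {V : Type*} [NormedAddCommGroup V] [InnerProductSpace ℝ V]

theorem mem_exposedFace_iff {E : Set V} (hE : Bornology.IsBounded E) {u x : V} :
    x ∈ exposedFace E u ↔ x ∈ E ∧ ∀ y ∈ E, ⟪y, u⟫ ≤ ⟪x, u⟫ := by
  have hbdd : BddAbove ((fun y => ⟪y, u⟫) '' E) := by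
    obtain ⟨C, hC⟩ := hE.exists_norm_le
    refine ⟨C * ‖u‖, ?_⟩
    rintro _ ⟨y, hy, rfl⟩
    exact (real_inner_le_norm y u).trans (mul_le_mul_of_nonneg_right (hC y hy) (norm_nonneg u))
  constructor
  · rintro ⟨hxE, hx⟩
    exact ⟨hxE, fun y hy => hx ▸ le_csSup hbdd (Set.mem_image_of_mem _ hy)⟩
  · rintro ⟨hxE, hx⟩
    have hgreatest : IsGreatest ((fun y => ⟪y, u⟫) '' E) ⟪x, u⟫ := by
      refine ⟨Set.mem_image_of_mem _ hxE, ?_⟩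
      rintro _ ⟨y, hy, rfl⟩
      exact hx y hy
    exact ⟨hxE, hgreatest.csSup_eq.symm⟩

theorem exposedFace_subset (E : Set V) (u : V) : exposedFace E u ⊆ E := fun _ hx => hx.1

theorem exposedFace_nonempty {E : Set V} (hE : IsCompact E) (hne : E.Nonempty) (u : V) :
    (exposedFace E u).Nonempty := by
  have hcont : Continuous fun y : V => ⟪y, u⟫ := continuous_id.inner continuous_const
  obtain ⟨x, hxE, hmax⟩ := hE.exists_isMaxOn hne hcont.continuousOn
  exact ⟨x, (mem_exposedFace_iff hE.isBounded).2 ⟨hxE, fun y hy => hmax hy⟩⟩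

theorem exposedFace_image (L : V ≃ₗᵢ[ℝ] V) (E : Set V) (u : V) :
    exposedFace (L '' E) (L u) = L '' exposedFace E u := by
  have hvalues : (fun y => ⟪y, L u⟫) '' (L '' E) = (fun y => ⟪y, u⟫) '' E := by
    simp only [Set.image_image, LinearIsometryEquiv.inner_map_map]
  ext x
  obtain ⟨x, rfl⟩ := L.surjective x
  simp only [exposedFace, hvalues, Set.mem_ofPred_eq, L.injective.mem_set_image,
    LinearIsometryEquiv.inner_map_map]

end ExposedFace

section Averaging

variable {V : Type*} [NormedAddCommGroup V] [InnerProductSpace ℝ V] [CompleteSpace V]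

theorem exposedFace_integral {X : Type*} [TopologicalSpace X] [MeasurableSpace X]
    [OpensMeasurableSpace X] [Nonempty X] (μ : Measure X) [μ.IsOpenPosMeasure]
    {E F : Set V} (hE : IsCompact E) {f : X → V} (hf : Continuous f) (hfi : Integrable f μ)
    (hfF : ∀ a, exposedFace E (f a) = F) :
    exposedFace E (∫ a, f a ∂μ) = F := by
  have hinner : ∀ x, ⟪x, ∫ a, f a ∂μ⟫ = ∫ a, ⟪x, f a⟫ ∂μ := fun x => (integral_inner hfi x).symm
  have hcont : ∀ x, Continuous fun a => ⟪x, f a⟫ := fun x => continuous_const.inner hf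
  have hint : ∀ x, Integrable (fun a => ⟪x, f a⟫) μ := fun x => hfi.const_inner x
  have hmax : ∀ y ∈ F, ∀ x ∈ E, ∀ a, ⟪x, f a⟫ ≤ ⟪y, f a⟫ := fun y hy x hx a =>
    ((mem_exposedFace_iff hE.isBounded).1 ((hfF a).symm ▸ hy)).2 x hx
  have hFE : F ⊆ E := hfF (Classical.arbitrary X) ▸ exposedFace_subset E _
  ext x
  rw [mem_exposedFace_iff hE.isBounded]
  constructor
  · rintro ⟨hxE, hxmax⟩
    obtain ⟨y, hy⟩ : F.Nonempty :=
      hfF (Classical.arbitrary X) ▸ exposedFace_nonempty hE ⟨x, hxE⟩ _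
    have hxy : (fun a => ⟪x, f a⟫) = fun a => ⟪y, f a⟫ :=
      (hcont x).eq_of_le_of_integral_le (hcont y) (hint x) (hint y) (hmax y hy x hxE)
        (by simpa only [hinner] using hxmax y (hFE hy))
    obtain ⟨a⟩ := ‹Nonempty X›
    rw [← hfF a, mem_exposedFace_iff hE.isBounded]
    refine ⟨hxE, fun z hz => ?_⟩
    rw [congrFun hxy a]
    exact hmax y hy z hz a
  · intro hx
    refine ⟨hFE hx, fun z hz => ?_⟩
    simp only [hinner]
    exact integral_mono (hint z) (hint x) (hmax x hx z hz)

theorem integral_orbit_fixed {Γ : Type*} [Group Γ] [MeasurableSpace Γ] [MeasurableMul Γ]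
    (μ : Measure Γ) [μ.IsMulLeftInvariant] (ρ : Γ →* (V ≃ₗᵢ[ℝ] V)) (u : V) (g : Γ) :
    ρ g (∫ h, ρ h u ∂μ) = ∫ h, ρ h u ∂μ := by
  calc ρ g (∫ h, ρ h u ∂μ) = ∫ h, ρ (g * h) u ∂μ := by
        simp only [map_mul]; exact ((ρ g).toLinearIsometry.integral_comp_comm _).symm
    _ = ∫ h, ρ h u ∂μ := integral_mul_left_eq_self (fun h => ρ h u) g

end Averaging

theorem stmt_4_general {V : Type*} [NormedAddCommGroup V] [InnerProductSpace ℝ V]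
    [FiniteDimensional ℝ V]
    {Γ : Type*} [Group Γ] [TopologicalSpace Γ] [CompactSpace Γ] [IsTopologicalGroup Γ]
    (ρ : Γ →* (V ≃ₗᵢ[ℝ] V)) (hρcont : Continuous fun p : Γ × V => ρ p.1 p.2)
    (E F : Set V) (hEcomp : IsCompact E)
    (hGE : ∀ g : Γ, (fun v => ρ g v) '' E = E)
    (hGF : ∀ g : Γ, (fun v => ρ g v) '' F = F)
    (hexp : ∃ u : V, F = exposedFace E u) :
    ∃ u : V, F = exposedFace E u ∧ ∀ g : Γ, ρ g u = u := by
  obtain ⟨u, hu⟩ := hexp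
  borelize Γ
  have horbit_cont : Continuous fun g => ρ g u :=
    hρcont.comp (continuous_id.prodMk continuous_const)
  have horbit_exposes : ∀ g, exposedFace E (ρ g u) = F := fun g => by
    rw [← hGE g, exposedFace_image, ← hu, hGF g]
  refine ⟨∫ g, ρ g u ∂Measure.haar, ?_, integral_orbit_fixed _ ρ u⟩
  exact (exposedFace_integral _ hEcomp horbit_cont
    (horbit_cont.integrable_of_hasCompactSupport (.of_compactSpace _))
    horbit_exposes).symm

/-- If a compact group `Γ` acts on `V` by orthogonal (linear isometric) transformations
preserving both a nonempty compact convex set `E` and an exposed face `F` of `E`, then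
some vector exposing `F` is fixed by all of `Γ`. -/
theorem stmt_4 {V : Type*} [NormedAddCommGroup V] [InnerProductSpace ℝ V]
    [FiniteDimensional ℝ V]
    {Γ : Type*} [Group Γ] [TopologicalSpace Γ] [CompactSpace Γ] [IsTopologicalGroup Γ]
    (ρ : Γ →* (V ≃ₗᵢ[ℝ] V)) (hρcont : Continuous fun p : Γ × V => ρ p.1 p.2)
    (E F : Set V) (hEcomp : IsCompact E) (hEconv : Convex ℝ E) (hEne : E.Nonempty)
    (hGE : ∀ g : Γ, (fun v => ρ g v) '' E = E)
    (hGF : ∀ g : Γ, (fun v => ρ g v) '' F = F)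
    (hexp : ∃ u : V, F = exposedFace E u) :
    ∃ u : V, F = exposedFace E u ∧ ∀ g : Γ, ρ g u = u :=
  stmt_4_general ρ hρcont E F hEcomp hGE hGF hexp
end

section
/- Let f : X → ℝ be a smooth function on a Riemannian manifold, and suppose x : [T, ∞) → X is a negative gradient flow line of f (ẋ = −grad f(x)) such that f satisfies a Lojasiewicz-type estimate: for constants α > 0, 1/2 < γ < 1 and critical value a, with a < f(x(t)) < a + δ and |f(x(t)) − a|^γ ≤ α |grad f(x(t))| for all t ≥ T. Then ∫_t^∞ |ẋ(s)| ds ≤ (α/(1−γ)) (f(x(t)) − a)^{1−γ} for all t ≥ T; in particular the flow line has finite length and converges as t → ∞. -/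
open Filter

/-- Lojasiewicz length estimate along a negative gradient flow line: if
`|f(x(t)) − a|^γ ≤ α |grad f(x(t))|` with `a < f(x(t)) < a + δ` for `t ≥ T` and
`f(x(t)) → a` (the critical value), then
`∫_t^∞ |ẋ| ≤ (α/(1−γ)) (f(x(t)) − a)^{1−γ}`; in particular the flow line has finite
length and converges as `t → ∞`. -/
theorem stmt_9 {E : Type*} [NormedAddCommGroup E] [InnerProductSpace ℝ E]
    [FiniteDimensional ℝ E]
    (f : E → ℝ) (hf : ContDiff ℝ (⊤ : ℕ∞) f) (x : ℝ → E) (a T α δ γ : ℝ)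
    (hα : 0 < α) (hδ : 0 < δ) (hγ1 : 1 / 2 < γ) (hγ2 : γ < 1)
    (hflow : ∀ t, T ≤ t → HasDerivAt x (-(gradient f (x t))) t)
    (hbound : ∀ t, T ≤ t → a < f (x t) ∧ f (x t) < a + δ)
    (hloj : ∀ t, T ≤ t → (f (x t) - a) ^ γ ≤ α * ‖gradient f (x t)‖)
    (hlim : Tendsto (fun t => f (x t)) atTop (nhds a)) :
    (∀ t, T ≤ t →
      ∫ s in Set.Ioi t, ‖deriv x s‖ ≤ α / (1 - γ) * (f (x t) - a) ^ (1 - γ)) ∧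
    ∃ x_inf : E, Tendsto x atTop (nhds x_inf) := by
  open MeasureTheory Set intervalIntegral in
  have hγpos : (0:ℝ) < 1 - γ := by linarith
  have hdiff : Differentiable ℝ f := hf.differentiable (by simp)
  have hgcont : Continuous fun y => gradient f y := by
    have h1 : Continuous (fderiv ℝ f) := hf.continuous_fderiv (by simp)
    exact (InnerProductSpace.toDual ℝ E).symm.continuous.comp h1
  have hposval : ∀ s, T ≤ s → 0 < f (x s) - a := fun s hs => sub_pos.mpr (hbound s hs).1
  -- derivative of the value function along the flow
  have hG : ∀ s, T ≤ s → HasDerivAt (fun u => f (x u) - a) (-‖gradient f (x s)‖^2) s := by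
    intro s hs
    have h1 : HasGradientAt f (gradient f (x s)) (x s) := (hdiff (x s)).hasGradientAt
    have h2 := h1.hasFDerivAt.comp_hasDerivAt s (hflow s hs)
    have h3 : ((InnerProductSpace.toDual ℝ E) (gradient f (x s))) (-(gradient f (x s)))
        = -‖gradient f (x s)‖^2 := by
      rw [InnerProductSpace.toDual_apply_apply]; simp [inner_neg_right, real_inner_self_eq_norm_sq]
    rw [h3] at h2
    exact h2.sub_const a
  -- derivative of the Lyapunov function (f(x t)-a)^(1-γ)
  have hφ : ∀ s, T ≤ s → HasDerivAt (fun u => (f (x u) - a) ^ (1-γ))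
      ((-‖gradient f (x s)‖^2) * (1-γ) * (f (x s) - a) ^ (1-γ-1)) s := by
    intro s hs
    exact (hG s hs).rpow_const (Or.inl (ne_of_gt (hposval s hs)))
  -- pointwise Lojasiewicz inequality for the derivative
  have hineq : ∀ s, T ≤ s → (1-γ)/α * ‖gradient f (x s)‖
      ≤ ‖gradient f (x s)‖^2 * (1-γ) * (f (x s) - a) ^ (1-γ-1) := by
    intro s hs
    set g := f (x s) - a with hg
    set n := ‖gradient f (x s)‖ with hn'
    have hgpos : 0 < g := hposval s hs
    have hl : g ^ γ ≤ α * n := hloj s hs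
    have hgγ : 0 < g ^ γ := Real.rpow_pos_of_pos hgpos γ
    have hn : 0 < n := by by_contra h; push_neg at h; nlinarith
    rw [show (1-γ-1) = -γ by ring, Real.rpow_neg hgpos.le, le_mul_inv_iff₀ hgγ,
      div_mul_eq_mul_div, div_mul_eq_mul_div, div_le_iff₀ hα]
    nlinarith [mul_le_mul_of_nonneg_left hl (mul_nonneg hγpos.le hn.le)]
  -- the key length estimate on finite intervals
  have key : ∀ t b, T ≤ t → t ≤ b →
      ∫ s in t..b, ‖gradient f (x s)‖ ≤ α/(1-γ) * (f (x t) - a)^(1-γ) := by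
    intro t b ht htb
    have hmemT : ∀ s ∈ Icc t b, T ≤ s := fun s hs => ht.trans hs.1
    have hxc : ContinuousOn x (Icc t b) := fun s hs =>
      ((hflow s (hmemT s hs)).continuousAt).continuousWithinAt
    have hGc : ContinuousOn (fun s => ‖gradient f (x s)‖) (Icc t b) :=
      (hgcont.comp_continuousOn hxc).norm
    have hfc : ContinuousOn (fun s => f (x s) - a) (Icc t b) :=
      (hdiff.continuous.comp_continuousOn hxc).sub continuousOn_const
    have hΦc : ContinuousOn
        (fun s => ‖gradient f (x s)‖^2 * (1-γ) * (f (x s) - a) ^ (1-γ-1)) (Icc t b) := by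
      refine (((hGc.pow 2).mul continuousOn_const).mul
        (hfc.rpow_const fun s hs => Or.inl (ne_of_gt (hposval s (hmemT s hs)))))
    have hint2 : IntervalIntegrable
        (fun s => ‖gradient f (x s)‖^2 * (1-γ) * (f (x s) - a) ^ (1-γ-1)) volume t b := by
      rw [intervalIntegrable_iff_integrableOn_Icc_of_le htb]
      exact hΦc.integrableOn_compact isCompact_Icc
    have hint1 : IntervalIntegrable
        (fun s => (1-γ)/α * ‖gradient f (x s)‖) volume t b := by
      rw [intervalIntegrable_iff_integrableOn_Icc_of_le htb]
      exact (hGc.const_smul ((1-γ)/α)).integrableOn_compact isCompact_Icc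
    have hFTC : ∫ s in t..b, (-‖gradient f (x s)‖^2) * (1-γ) * (f (x s) - a) ^ (1-γ-1)
        = (f (x b) - a)^(1-γ) - (f (x t) - a)^(1-γ) := by
      refine intervalIntegral.integral_eq_sub_of_hasDerivAt
        (fun s hs => hφ s (hmemT s (by rwa [uIcc_of_le htb] at hs))) ?_
      have : IntervalIntegrable
          (fun s => -(‖gradient f (x s)‖^2 * (1-γ) * (f (x s) - a) ^ (1-γ-1))) volume t b :=
        hint2.neg
      simpa [neg_mul] using this
    have hmono : ∫ s in t..b, (1-γ)/α * ‖gradient f (x s)‖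
        ≤ ∫ s in t..b, ‖gradient f (x s)‖^2 * (1-γ) * (f (x s) - a) ^ (1-γ-1) :=
      intervalIntegral.integral_mono_on htb hint1 hint2 (fun s hs => hineq s (hmemT s hs))
    have hneg : ∫ s in t..b, ‖gradient f (x s)‖^2 * (1-γ) * (f (x s) - a) ^ (1-γ-1)
        = (f (x t) - a)^(1-γ) - (f (x b) - a)^(1-γ) := by
      have := hFTC
      rw [show (fun s => (-‖gradient f (x s)‖^2) * (1-γ) * (f (x s) - a) ^ (1-γ-1))
        = (fun s => -(‖gradient f (x s)‖^2 * (1-γ) * (f (x s) - a) ^ (1-γ-1))) by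
          funext s; ring] at this
      rw [intervalIntegral.integral_neg] at this
      linarith
    rw [intervalIntegral.integral_const_mul] at hmono
    have hb0 : 0 ≤ (f (x b) - a)^(1-γ) := Real.rpow_nonneg (hposval b (ht.trans htb)).le _
    have hfin : (1-γ)/α * ∫ s in t..b, ‖gradient f (x s)‖ ≤ (f (x t) - a)^(1-γ) := by
      rw [hneg] at hmono; linarith
    have hcpos : (0:ℝ) < (1-γ)/α := by positivity
    calc ∫ s in t..b, ‖gradient f (x s)‖ ≤ (f (x t) - a)^(1-γ) / ((1-γ)/α) :=
          (le_div_iff₀' hcpos).mpr hfin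
      _ = α/(1-γ) * (f (x t) - a)^(1-γ) := by field_simp
  set G : ℝ → ℝ := fun s => ‖gradient f (x s)‖ with hGdef
  have hGcOn : ∀ {u v : ℝ}, T ≤ u → ContinuousOn G (Icc u v) := by
    intro u v hu
    exact (hgcont.comp_continuousOn fun s hs =>
      ((hflow s (hu.trans hs.1)).continuousAt).continuousWithinAt).norm
  -- integrability and integral bound on Ioi t
  have main : ∀ t, T ≤ t → IntegrableOn G (Ioi t) ∧
      ∫ s in Set.Ioi t, G s ≤ α / (1 - γ) * (f (x t) - a) ^ (1 - γ) := by
    intro t ht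
    have hbseq : Tendsto (fun n : ℕ => t + (n:ℝ)) atTop atTop :=
      tendsto_atTop_add_const_left _ t tendsto_natCast_atTop_atTop
    have hGIoc : ∀ n : ℕ, IntegrableOn G (Ioc t (t + n)) := by
      intro n
      exact ((hGcOn ht).integrableOn_compact isCompact_Icc).mono_set Ioc_subset_Icc_self
    have hbd : ∀ n : ℕ, ∫ s in t..(t + (n:ℝ)), ‖G s‖ ≤ α/(1-γ) * (f (x t) - a)^(1-γ) := by
      intro n
      have : ∀ s, ‖G s‖ = G s := fun s => norm_norm _
      simp only [this]
      exact key t (t + n) ht (by simp)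
    have hGint : IntegrableOn G (Ioi t) :=
      integrableOn_Ioi_of_intervalIntegral_norm_bounded
        (α/(1-γ) * (f (x t) - a)^(1-γ)) t hGIoc hbseq (Eventually.of_forall hbd)
    refine ⟨hGint, ?_⟩
    refine le_of_tendsto (intervalIntegral_tendsto_integral_Ioi t hGint hbseq)
      (Eventually.of_forall fun n => key t (t + n) ht (by simp))
  constructor
  · intro t ht
    have heq : ∫ s in Set.Ioi t, ‖deriv x s‖ = ∫ s in Set.Ioi t, G s := by
      refine setIntegral_congr_fun measurableSet_Ioi fun s hs => ?_
      have hTs : T ≤ s := ht.trans (le_of_lt hs)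
      rw [(hflow s hTs).deriv, norm_neg]
    rw [heq]; exact (main t ht).2
  · -- convergence
    have hkey2 : ∀ t s, T ≤ t → t ≤ s →
        ‖x s - x t‖ ≤ α/(1-γ) * (f (x t) - a)^(1-γ) := by
      intro t s ht hts
      have hD : IntervalIntegrable (fun u => -(gradient f (x u))) volume t s := by
        rw [intervalIntegrable_iff_integrableOn_Icc_of_le hts]
        exact (((hgcont.comp_continuousOn fun u hu =>
          ((hflow u (ht.trans hu.1)).continuousAt).continuousWithinAt)).neg).integrableOn_compact
          isCompact_Icc
      have hFTC : ∫ u in t..s, -(gradient f (x u)) = x s - x t :=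
        intervalIntegral.integral_eq_sub_of_hasDerivAt
          (fun u hu => hflow u (ht.trans (by rw [uIcc_of_le hts] at hu; exact hu.1))) hD
      calc ‖x s - x t‖ = ‖∫ u in t..s, -(gradient f (x u))‖ := by rw [hFTC]
        _ ≤ ∫ u in t..s, ‖-(gradient f (x u))‖ :=
            intervalIntegral.norm_integral_le_integral_norm hts
        _ = ∫ u in t..s, G u := by simp only [norm_neg]; rfl
        _ ≤ _ := key t s ht hts
    have hφ0 : Tendsto (fun t => α/(1-γ) * (f (x t) - a)^(1-γ)) atTop (nhds 0) := by
      have h1 : Tendsto (fun t => f (x t) - a) atTop (nhds 0) := by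
        simpa using hlim.sub_const a
      have hc : Tendsto (fun u : ℝ => u ^ (1-γ)) (nhds 0) (nhds ((0:ℝ) ^ (1-γ))) :=
        (Real.continuousAt_rpow_const 0 (1-γ) (Or.inr hγpos.le)).tendsto
      rw [Real.zero_rpow (ne_of_gt hγpos)] at hc
      have h2 := hc.comp h1
      simpa using tendsto_const_nhds.mul h2
    have hC : Cauchy (Filter.map x atTop) := by
      rw [Metric.cauchy_iff]
      refine ⟨map_neBot, fun ε hε => ?_⟩
      have : ∀ᶠ t in atTop, α/(1-γ) * (f (x t) - a)^(1-γ) < ε/2 :=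
        hφ0.eventually (eventually_lt_nhds (by positivity : (0:ℝ) < ε/2))
      obtain ⟨t₀, ht₀⟩ := (this.and (eventually_ge_atTop T)).exists
      refine ⟨x '' Ici t₀, image_mem_map (Ici_mem_atTop t₀), ?_⟩
      rintro p ⟨s, hs, rfl⟩ q ⟨s', hs', rfl⟩
      have h1 : dist (x s) (x t₀) ≤ α/(1-γ) * (f (x t₀) - a)^(1-γ) := by
        rw [dist_eq_norm]; exact hkey2 t₀ s ht₀.2 hs
      have h2 : dist (x s') (x t₀) ≤ α/(1-γ) * (f (x t₀) - a)^(1-γ) := by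
        rw [dist_eq_norm]; exact hkey2 t₀ s' ht₀.2 hs'
      calc dist (x s) (x s') ≤ dist (x s) (x t₀) + dist (x s') (x t₀) :=
            dist_triangle_right _ _ _
        _ < ε := by linarith [ht₀.1]
    obtain ⟨x_inf, hx_inf⟩ := CompleteSpace.complete hC
    exact ⟨x_inf, hx_inf⟩
end

section
/- In the setting of the previous statement, with ξ(t) = (f(x(t)) − a)^{1−2γ}, one has ξ'(t) ≥ (2γ−1)/α² for t ≥ T, and hence (f(x(t)) − a)^{1−γ} ≤ ((2γ−1)(t−T)/α²)^{−(1−γ)/(2γ−1)} for t > T; combining with the length estimate gives d(x(t), x_∞) ≤ C/(t−T)^ψ with ψ = (1−γ)/(2γ−1) and C = (α/(1−γ))(α²/(2γ−1))^ψ. -/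
open Filter

/-- Rate of convergence along the negative gradient flow. With
`ξ(t) = (f(x(t)) − a)^{1−2γ}` one has `ξ'(t) ≥ (2γ−1)/α²` for `t ≥ T`; hence
`(f(x(t)) − a)^{1−γ} ≤ ((2γ−1)(t−T)/α²)^{−(1−γ)/(2γ−1)}` for `t > T`, and combining
with the length estimate, `d(x(t), x_∞) ≤ C/(t−T)^ψ` where `ψ = (1−γ)/(2γ−1)` and
`C = (α/(1−γ))(α²/(2γ−1))^ψ`. -/
theorem stmt_10 {E : Type*} [NormedAddCommGroup E] [InnerProductSpace ℝ E]
    [FiniteDimensional ℝ E]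
    (f : E → ℝ) (hf : ContDiff ℝ (⊤ : ℕ∞) f) (x : ℝ → E) (a T α δ γ : ℝ)
    (hα : 0 < α) (hδ : 0 < δ) (hγ1 : 1 / 2 < γ) (hγ2 : γ < 1)
    (hflow : ∀ t, T ≤ t → HasDerivAt x (-(gradient f (x t))) t)
    (hbound : ∀ t, T ≤ t → a < f (x t) ∧ f (x t) < a + δ)
    (hloj : ∀ t, T ≤ t → (f (x t) - a) ^ γ ≤ α * ‖gradient f (x t)‖)
    (hlim : Tendsto (fun t => f (x t)) atTop (nhds a))
    (x_inf : E) (hconv : Tendsto x atTop (nhds x_inf))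
    (hlen : ∀ t, T ≤ t → dist (x t) x_inf ≤ α / (1 - γ) * (f (x t) - a) ^ (1 - γ)) :
    (∀ t, T ≤ t → ∀ ξ' : ℝ,
      HasDerivAt (fun s => (f (x s) - a) ^ (1 - 2 * γ)) ξ' t → (2 * γ - 1) / α ^ 2 ≤ ξ') ∧
    (∀ t, T < t →
      (f (x t) - a) ^ (1 - γ) ≤
        ((2 * γ - 1) * (t - T) / α ^ 2) ^ (-(1 - γ) / (2 * γ - 1))) ∧
    (∀ t, T < t →
      dist (x t) x_inf ≤
        (α / (1 - γ) * (α ^ 2 / (2 * γ - 1)) ^ ((1 - γ) / (2 * γ - 1))) /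
          (t - T) ^ ((1 - γ) / (2 * γ - 1))) := by
  have hγ' : 0 < 2 * γ - 1 := by linarith
  have h1γ : 0 < 1 - γ := by linarith
  have hα2 : 0 < α ^ 2 := by positivity
  set c : ℝ := (2 * γ - 1) / α ^ 2 with hc
  have hcpos : 0 < c := by positivity
  set g : ℝ → ℝ := fun t => f (x t) - a with hgdef
  have hgpos : ∀ t, T ≤ t → 0 < g t := fun t ht => sub_pos.2 (hbound t ht).1
  -- derivative of g
  have hgd : ∀ t, T ≤ t → HasDerivAt g (-‖gradient f (x t)‖ ^ 2) t := by
    intro t ht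
    have hdf : HasFDerivAt f ((InnerProductSpace.toDual ℝ E) (gradient f (x t))) (x t) :=
      ((hf.differentiable (by simp)) (x t)).hasGradientAt.hasFDerivAt
    have h := (hdf.comp_hasDerivAt t (hflow t ht)).sub_const a
    rw [InnerProductSpace.toDual_apply_apply] at h
    simpa [hgdef, inner_neg_right, real_inner_self_eq_norm_sq] using h
  -- derivative of ξ
  set D : ℝ → ℝ := fun t => -‖gradient f (x t)‖ ^ 2 * (1 - 2 * γ) * g t ^ (1 - 2 * γ - 1)
    with hDdef
  have hξd : ∀ t, T ≤ t → HasDerivAt (fun s => g s ^ (1 - 2 * γ)) (D t) t := by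
    intro t ht
    exact (hgd t ht).rpow_const (Or.inl (ne_of_gt (hgpos t ht)))
  -- lower bound on D
  have hDge : ∀ t, T ≤ t → c ≤ D t := by
    intro t ht
    have hgt := hgpos t ht
    have hloj' := hloj t ht
    have hsq : g t ^ (2 * γ) ≤ α ^ 2 * ‖gradient f (x t)‖ ^ 2 := by
      have h1 : (g t ^ γ) ^ 2 ≤ (α * ‖gradient f (x t)‖) ^ 2 := by
        apply pow_le_pow_left₀ (Real.rpow_nonneg hgt.le γ) hloj'
      calc g t ^ (2 * γ) = (g t ^ γ) ^ (2 : ℕ) := by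
            rw [← Real.rpow_natCast (g t ^ γ) 2, ← Real.rpow_mul hgt.le]
            ring_nf
        _ ≤ (α * ‖gradient f (x t)‖) ^ 2 := h1
        _ = α ^ 2 * ‖gradient f (x t)‖ ^ 2 := by ring
    have hg2 : 0 < g t ^ (2 * γ) := Real.rpow_pos_of_pos hgt _
    have hN : 0 < ‖gradient f (x t)‖ ^ 2 := by nlinarith
    have hD : D t = (2 * γ - 1) * (‖gradient f (x t)‖ ^ 2 * (g t ^ (2 * γ))⁻¹) := by
      show -‖gradient f (x t)‖ ^ 2 * (1 - 2 * γ) * g t ^ (1 - 2 * γ - 1) = _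
      rw [show (1 - 2 * γ - 1) = -(2 * γ) by ring, Real.rpow_neg hgt.le]
      ring
    rw [hD, hc, div_eq_mul_inv]
    apply mul_le_mul_of_nonneg_left _ hγ'.le
    rw [← div_eq_mul_inv, ← one_div, div_le_div_iff₀ hα2 hg2]
    nlinarith
  -- integrated estimate
  have hmono : ∀ t, T ≤ t → c * (t - T) ≤ g t ^ (1 - 2 * γ) - g T ^ (1 - 2 * γ) := by
    intro t ht
    refine (convex_Ici T).mul_sub_le_image_sub_of_le_deriv
      (f := fun s => g s ^ (1 - 2 * γ))
      (fun s hs => ((hξd s hs).continuousAt).continuousWithinAt)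
      (fun s hs => by
        rw [interior_Ici] at hs
        exact ((hξd s hs.le).differentiableAt).differentiableWithinAt)
      (fun s hs => by
        rw [interior_Ici] at hs
        rw [(hξd s hs.le).deriv]; exact hDge s hs.le)
      T (Set.mem_Ici.2 le_rfl) t ht ht
  have hxiB : ∀ t, T < t → c * (t - T) ≤ g t ^ (1 - 2 * γ) := by
    intro t ht
    have h0 : 0 < g T ^ (1 - 2 * γ) := Real.rpow_pos_of_pos (hgpos T le_rfl) _
    linarith [hmono t ht.le]
  have hne : (2 * γ - 1 : ℝ) ≠ 0 := hγ'.ne'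
  have part2 : ∀ t, T < t →
      g t ^ (1 - γ) ≤ ((2 * γ - 1) * (t - T) / α ^ 2) ^ (-(1 - γ) / (2 * γ - 1)) := by
    intro t ht
    have hB : (2 * γ - 1) * (t - T) / α ^ 2 = c * (t - T) := by rw [hc]; ring
    have hBpos : 0 < c * (t - T) := mul_pos hcpos (by linarith)
    have hq : (1 - γ : ℝ) = (1 - 2 * γ) * (-(1 - γ) / (2 * γ - 1)) := by
      rw [mul_div_assoc', eq_div_iff hne]
      ring
    have heq : (g t ^ (1 - 2 * γ)) ^ (-(1 - γ) / (2 * γ - 1)) = g t ^ (1 - γ) := by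
      rw [← Real.rpow_mul (hgpos t ht.le).le, ← hq]
    rw [hB, ← heq]
    refine Real.rpow_le_rpow_of_nonpos hBpos (hxiB t ht) ?_
    apply div_nonpos_of_nonpos_of_nonneg <;> linarith
  refine ⟨fun t ht ξ' hξ => ?_, part2, fun t ht => ?_⟩
  · rw [hξ.unique (hξd t ht)]
    exact hDge t ht
  · set ψ := (1 - γ) / (2 * γ - 1) with hψ
    have hnegψ : -(1 - γ) / (2 * γ - 1) = -ψ := by rw [hψ]; ring
    have htT : (0:ℝ) < t - T := by linarith
    have hb : (0:ℝ) ≤ (2 * γ - 1) / α ^ 2 := by positivity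
    calc dist (x t) x_inf ≤ α / (1 - γ) * g t ^ (1 - γ) := hlen t ht.le
      _ ≤ α / (1 - γ) * ((2 * γ - 1) * (t - T) / α ^ 2) ^ (-(1 - γ) / (2 * γ - 1)) :=
          mul_le_mul_of_nonneg_left (part2 t ht) (by positivity)
      _ = (α / (1 - γ) * (α ^ 2 / (2 * γ - 1)) ^ ψ) / (t - T) ^ ψ := by
          rw [hnegψ, show (2 * γ - 1) * (t - T) / α ^ 2
              = (t - T) * ((2 * γ - 1) / α ^ 2) by ring,
            Real.mul_rpow htT.le hb, Real.rpow_neg htT.le, Real.rpow_neg hb,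
            ← Real.inv_rpow hb, inv_div, div_eq_mul_inv]
          ring
end

section
/- Let M be a smooth manifold, f : M → ℝ smooth and convex along a family of curves in the following sense: for fixed t, s ↦ f(H(t,s)) is convex on [0,1], where H(t,·) joins γ₁(t) to γ₂(t). Suppose γ₁, γ₂ : ℝ → M satisfy, for some constant C > 0, (∂/∂s)|_{s=0} f(H(t,s)) ≥ −C·m(t) where m(t) := |grad f(γ₁(t))|, and d/dt f(γ₁(t)) = −m(t)². If f(γ₁(t)) is bounded below, then there is a sequence tᵢ → ∞ with m(tᵢ) → 0, and consequently liminf_{t→∞} f(γ₂(t)) ≥ lim_{t→∞} f(γ₁(t)). -/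
/-!
Along the flow, `φ = f ∘ γ₁` decreases with `φ' = -m²` and is bounded below, so it converges to
some `L`, and `m` cannot stay above any `ε > 0` for all large times (otherwise `φ` would drop
linearly to `-∞`); hence `m(tᵢ) → 0` along some `tᵢ → ∞`. Convexity of `s ↦ f (H t s)` gives
`f (γ₂ t) ≥ f (γ₁ t) + D t ≥ f (γ₁ t) - C m t`, and evaluating this along `tᵢ`, together with the
monotonicity of `f ∘ γ₂`, yields `f (γ₂ t) ≥ L` for every `t`.
-/

open Filter Set Topology

theorem frequently_neg_lt_of_hasDerivAt_of_bddBelow {φ φ' : ℝ → ℝ}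
    (hφ : ∀ t, HasDerivAt φ (φ' t) t) (hbdd : BddBelow (range φ)) {ε : ℝ} (hε : 0 < ε) :
    ∃ᶠ t in atTop, -ε < φ' t := by
  rw [frequently_atTop]
  intro T
  by_contra! hslow
  have hdecay : ∀ t ≥ T, φ t ≤ φ T + ε * T - ε * t := by
    intro t ht
    have := (convex_Ici T).image_sub_le_mul_sub_of_deriv_le
      (fun x _ => (hφ x).continuousAt.continuousWithinAt)
      (fun x _ => (hφ x).differentiableAt.differentiableWithinAt)
      (fun x hx => (hφ x).deriv ▸ hslow x (interior_subset hx)) T self_mem_Ici t ht ht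
    linarith
  have hlin : Tendsto (fun t => φ T + ε * T - ε * t) atTop atBot :=
    tendsto_atBot_add_const_left _ _
      (tendsto_neg_atTop_atBot.comp (tendsto_id.const_mul_atTop hε))
  exact not_bddBelow_of_tendsto_atBot
    (tendsto_atBot_mono' atTop ((eventually_ge_atTop T).mono hdecay) hlin) hbdd

theorem mapClusterPt_zero_of_hasDerivAt_neg_sq {φ m : ℝ → ℝ}
    (hφ : ∀ t, HasDerivAt φ (-(m t) ^ 2) t) (hbdd : BddBelow (range φ)) :
    MapClusterPt 0 atTop m := by
  rw [Metric.nhds_basis_ball.mapClusterPt_iff_frequently]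
  intro ε hε
  refine (frequently_neg_lt_of_hasDerivAt_of_bddBelow hφ hbdd (pow_pos hε 2)).mono fun t ht => ?_
  rw [mem_ball_zero_iff, Real.norm_eq_abs]
  exact abs_lt_of_sq_lt_sq (by linarith) hε.le

theorem stmt_13_general {M : Type*} (f : M → ℝ) (γ₁ γ₂ : ℝ → M) (H : ℝ → ℝ → M)
    (m D : ℝ → ℝ) (C : ℝ)
    (hH0 : ∀ t, H t 0 = γ₁ t) (hH1 : ∀ t, H t 1 = γ₂ t)
    (hconv : ∀ t, ConvexOn ℝ (Set.Icc (0 : ℝ) 1) (fun s => f (H t s)))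
    (hD : ∀ t, HasDerivAt (fun s => f (H t s)) (D t) 0)
    (hDlow : ∀ t, -C * m t ≤ D t)
    (hγ₁ : ∀ t, HasDerivAt (fun u => f (γ₁ u)) (-(m t) ^ 2) t)
    (hbdd : BddBelow (Set.range fun t => f (γ₁ t)))
    (hanti : Antitone fun t => f (γ₂ t)) :
    ∃ L : ℝ, Tendsto (fun t => f (γ₁ t)) atTop (nhds L) ∧
      (∃ u : ℕ → ℝ, Tendsto u atTop atTop ∧
        Tendsto (fun i => m (u i)) atTop (nhds 0)) ∧
      L ≤ liminf (fun t => f (γ₂ t)) atTop := by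
  have hφ : Tendsto (fun t => f (γ₁ t)) atTop (𝓝 (⨅ t, f (γ₁ t))) :=
    tendsto_atTop_ciInf (antitone_of_hasDerivAt_nonpos hγ₁ fun t => neg_nonpos.2 (sq_nonneg _)) hbdd
  obtain ⟨u, hmu, hu⟩ := (mapClusterPt_zero_of_hasDerivAt_neg_sq hγ₁ hbdd).exists_seq_tendsto
  have hcompare : ∀ t, f (γ₁ t) - C * m t ≤ f (γ₂ t) := fun t => by
    have := (hconv t).le_slope_of_hasDerivAt (left_mem_Icc.2 zero_le_one)
      (right_mem_Icc.2 zero_le_one) zero_lt_one (hD t)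
    simp only [slope_def_field, hH0, hH1, sub_zero, div_one] at this
    linarith [hDlow t]
  have hlower : ∀ t, ⨅ t, f (γ₁ t) ≤ f (γ₂ t) := fun t => by
    have hlim := (hφ.comp hu).sub (hmu.const_mul C)
    rw [mul_zero, sub_zero] at hlim
    exact le_of_tendsto hlim <| (hu.eventually_ge_atTop t).mono fun i hi =>
      (hcompare (u i)).trans (hanti hi)
  refine ⟨_, hφ, ⟨u, hu, hmu⟩, ?_⟩
  rw [(tendsto_atTop_ciInf hanti ⟨_, forall_mem_range.2 hlower⟩).liminf_eq]
  exact le_ciInf hlower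

/-- Abstract convexity/comparison step for the Kempf-Ness flow. If `f∘γ₁` has
derivative `−m(t)²` and is bounded below, `s ↦ f(H(t,s))` is convex on `[0,1]` joining
`γ₁(t)` to `γ₂(t)` with initial `s`-derivative `≥ −C·m(t)`, and `f∘γ₂` is
nonincreasing, then `f(γ₁(t))` converges to some `L`, there is a sequence `tᵢ → ∞`
with `m(tᵢ) → 0`, and `liminf_{t→∞} f(γ₂(t)) ≥ L`. -/
theorem stmt_13 {M : Type*} (f : M → ℝ) (γ₁ γ₂ : ℝ → M) (H : ℝ → ℝ → M)
    (m D : ℝ → ℝ) (C : ℝ) (hC : 0 < C)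
    (hH0 : ∀ t, H t 0 = γ₁ t) (hH1 : ∀ t, H t 1 = γ₂ t)
    (hconv : ∀ t, ConvexOn ℝ (Set.Icc (0 : ℝ) 1) (fun s => f (H t s)))
    (hm : ∀ t, 0 ≤ m t)
    (hD : ∀ t, HasDerivAt (fun s => f (H t s)) (D t) 0)
    (hDlow : ∀ t, -C * m t ≤ D t)
    (hγ₁ : ∀ t, HasDerivAt (fun u => f (γ₁ u)) (-(m t) ^ 2) t)
    (hbdd : BddBelow (Set.range fun t => f (γ₁ t)))
    (hanti : Antitone fun t => f (γ₂ t)) :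
    ∃ L : ℝ, Tendsto (fun t => f (γ₁ t)) atTop (nhds L) ∧
      (∃ u : ℕ → ℝ, Tendsto u atTop atTop ∧
        Tendsto (fun i => m (u i)) atTop (nhds 0)) ∧
      L ≤ liminf (fun t => f (γ₂ t)) atTop :=
  stmt_13_general f γ₁ γ₂ H m D C hH0 hH1 hconv hD hDlow hγ₁ hbdd hanti
end

section
/- Let S ⊆ 𝔞₊ be a convex subset of a closed Weyl chamber 𝔞₊ in a Euclidean space 𝔞 with finite Weyl group W acting by orthogonal transformations. For λ ∈ 𝔞₊ let Δ_λ = Conv{w·λ : w ∈ W}. Assume the Gichev property: Δ_{μ+ν} = Δ_μ + Δ_ν (Minkowski sum) for all μ, ν ∈ 𝔞₊, and Δ_{cλ} = cΔ_λ for c ≥ 0. Then S^# = ⋃_{λ∈S} Δ_λ is a convex subset of 𝔞. -/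
open scoped Pointwise

/-- `Δ l` is the convex hull of the Weyl-group orbit of `l`. -/
noncomputable def weylPolytope {𝔞 : Type*} [NormedAddCommGroup 𝔞] [InnerProductSpace ℝ 𝔞]
    {W : Type*} [Group W] (ρ : W →* (𝔞 ≃ₗᵢ[ℝ] 𝔞)) (l : 𝔞) : Set 𝔞 :=
  convexHull ℝ (Set.range fun w : W => ρ w l)

/-- If `S` is a convex subset of the closed Weyl chamber `𝔞₊` and the Gichev property
`Δ_{μ+ν} = Δ_μ + Δ_ν`, `Δ_{c·λ} = c·Δ_λ` holds, then `S^# = ⋃_{λ∈S} Δ_λ` is convex. -/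
theorem stmt_14 {𝔞 : Type*} [NormedAddCommGroup 𝔞] [InnerProductSpace ℝ 𝔞]
    [FiniteDimensional ℝ 𝔞]
    {W : Type*} [Group W] [Finite W] (ρ : W →* (𝔞 ≃ₗᵢ[ℝ] 𝔞))
    (Aplus : Set 𝔞) (hAconv : Convex ℝ Aplus)
    (hAcone : ∀ l ∈ Aplus, ∀ c : ℝ, 0 ≤ c → c • l ∈ Aplus)
    (hGichev : ∀ l₁ ∈ Aplus, ∀ l₂ ∈ Aplus,
      weylPolytope ρ (l₁ + l₂) = weylPolytope ρ l₁ + weylPolytope ρ l₂)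
    (hhom : ∀ l ∈ Aplus, ∀ c : ℝ, 0 ≤ c → weylPolytope ρ (c • l) = c • weylPolytope ρ l)
    (S : Set 𝔞) (hS : S ⊆ Aplus) (hSconv : Convex ℝ S) :
    Convex ℝ (⋃ l ∈ S, weylPolytope ρ l) := by
  rintro x hx y hy a b ha hb hab
  simp only [Set.mem_iUnion] at hx hy ⊢
  obtain ⟨l₁, hl₁, hx⟩ := hx
  obtain ⟨l₂, hl₂, hy⟩ := hy
  refine ⟨a • l₁ + b • l₂, hSconv hl₁ hl₂ ha hb hab, ?_⟩
  have h₁ : a • l₁ ∈ Aplus := hAcone l₁ (hS hl₁) a ha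
  have h₂ : b • l₂ ∈ Aplus := hAcone l₂ (hS hl₂) b hb
  rw [hGichev _ h₁ _ h₂, hhom _ (hS hl₁) a ha, hhom _ (hS hl₂) b hb]
  exact Set.add_mem_add ⟨x, hx, rfl⟩ ⟨y, hy, rfl⟩
end

section
/- Let ρ : [a,b] → ℝ be given by ρ(t) = d(γ₁(t), γ₂(t)) where γ₁, γ₂ are negative gradient flow lines of a smooth function f on a Hadamard manifold M that is convex along geodesics, and γ(·, t) : [0,1] → M is the geodesic from γ₁(t) to γ₂(t). If ρ(t) ≠ 0, then ρ'(t) = −(1/ρ(t)) ∫₀¹ (∂²/∂s²) f(γ(s,t)) ds ≤ 0; in particular ρ is nonincreasing. -/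
open InnerProductSpace Real

/-- Distance between two negative gradient flow lines of a function convex along
geodesics (Hadamard setting, here a Euclidean/Hilbert space, where the geodesic from
`γ₁(t)` to `γ₂(t)` is `s ↦ γ₁(t) + s•(γ₂(t) − γ₁(t))`). If `F2 t s` denotes the second
derivative `(∂²/∂s²) f(γ(s,t))` and it is nonnegative (convexity along geodesics), then
whenever `ρ(t) = d(γ₁(t), γ₂(t)) ≠ 0`,
`ρ'(t) = −(1/ρ(t)) ∫₀¹ F2 t s ds ≤ 0`; in particular `ρ` is nonincreasing. -/
theorem stmt_19 {M : Type*} [NormedAddCommGroup M] [InnerProductSpace ℝ M]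
    [CompleteSpace M]
    (f : M → ℝ) (hf : ContDiff ℝ (⊤ : ℕ∞) f)
    (γ₁ γ₂ : ℝ → M)
    (h1 : ∀ t : ℝ, HasDerivAt γ₁ (-(gradient f (γ₁ t))) t)
    (h2 : ∀ t : ℝ, HasDerivAt γ₂ (-(gradient f (γ₂ t))) t)
    (F2 : ℝ → ℝ → ℝ)
    (hF2 : ∀ t s : ℝ,
      HasDerivAt (fun u => deriv (fun s' => f (γ₁ t + s' • (γ₂ t - γ₁ t))) u) (F2 t s) s)
    (hconvex : ∀ t s : ℝ, 0 ≤ F2 t s) :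
    (∀ t : ℝ, γ₂ t ≠ γ₁ t →
      HasDerivAt (fun u => dist (γ₁ u) (γ₂ u))
        (-(1 / dist (γ₁ t) (γ₂ t)) * ∫ s in (0 : ℝ)..1, F2 t s) t ∧
      -(1 / dist (γ₁ t) (γ₂ t)) * ∫ s in (0 : ℝ)..1, F2 t s ≤ 0) ∧
    Antitone fun t => dist (γ₁ t) (γ₂ t) := by
  have grad_eq : ∀ (x v : M), fderiv ℝ f x v = ⟪gradient f x, v⟫_ℝ := by
    intro x v
    rw [gradient, ← InnerProductSpace.toDual_apply_apply,
      LinearIsometryEquiv.apply_symm_apply]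
  -- the fundamental integral identity
  have key : ∀ t : ℝ, (∫ s in (0:ℝ)..1, F2 t s)
      = ⟪gradient f (γ₂ t), γ₂ t - γ₁ t⟫_ℝ - ⟪gradient f (γ₁ t), γ₂ t - γ₁ t⟫_ℝ := by
    intro t
    set δ : M := γ₂ t - γ₁ t with hδ
    have hcd : ∀ s : ℝ, HasDerivAt (fun s' : ℝ => γ₁ t + s' • δ) δ s := by
      intro s
      simpa using ((hasDerivAt_id s).smul_const δ).const_add (γ₁ t)
    have hg : ∀ s : ℝ, HasDerivAt (fun s' : ℝ => f (γ₁ t + s' • δ))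
        (⟪gradient f (γ₁ t + s • δ), δ⟫_ℝ) s := by
      intro s
      have := ((hf.differentiable (by simp) (γ₁ t + s • δ)).hasFDerivAt).comp_hasDerivAt s (hcd s)
      rwa [grad_eq] at this
    have hderiv : ∀ s : ℝ, deriv (fun s' : ℝ => f (γ₁ t + s' • δ)) s
        = ⟪gradient f (γ₁ t + s • δ), δ⟫_ℝ := fun s => (hg s).deriv
    have hgc : ContDiff ℝ ((⊤ : ℕ∞) : WithTop ℕ∞) (fun s' : ℝ => f (γ₁ t + s' • δ)) :=
      (hf.comp (contDiff_const.add (contDiff_id.smul contDiff_const))).of_le (by simp)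
    have hgc1 : ContDiff ℝ ((⊤ : ℕ∞) : WithTop ℕ∞)
        (deriv (fun s' : ℝ => f (γ₁ t + s' • δ))) :=
      (contDiff_infty_iff_deriv.mp hgc).2
    have hgc2 : Continuous (deriv (deriv (fun s' : ℝ => f (γ₁ t + s' • δ)))) :=
      (contDiff_infty_iff_deriv.mp hgc1).2.continuous
    have hF2eq : F2 t = deriv (deriv (fun s' : ℝ => f (γ₁ t + s' • δ))) :=
      funext fun s => ((hF2 t s).deriv).symm
    have hint : IntervalIntegrable (F2 t) MeasureTheory.volume 0 1 := by
      rw [hF2eq]; exact hgc2.intervalIntegrable 0 1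
    have hFTC := intervalIntegral.integral_eq_sub_of_hasDerivAt
      (f := fun u => deriv (fun s' : ℝ => f (γ₁ t + s' • δ)) u) (f' := F2 t)
      (fun s _ => hF2 t s) hint
    rw [hFTC]
    show deriv (fun s' : ℝ => f (γ₁ t + s' • δ)) 1 - deriv (fun s' : ℝ => f (γ₁ t + s' • δ)) 0
      = _
    rw [hderiv 1, hderiv 0, hδ]
    simp
  -- derivative of the squared distance
  have hΔ : ∀ t : ℝ, HasDerivAt (fun u => γ₂ u - γ₁ u)
      (-(gradient f (γ₂ t)) - -(gradient f (γ₁ t))) t := fun t => (h2 t).sub (h1 t)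
  have hh : ∀ t : ℝ, HasDerivAt (fun u => ⟪γ₂ u - γ₁ u, γ₂ u - γ₁ u⟫_ℝ)
      (-(2 * ∫ s in (0:ℝ)..1, F2 t s)) t := by
    intro t
    have := (hΔ t).inner ℝ (hΔ t)
    have hDΔ : ⟪-(gradient f (γ₂ t)) - -(gradient f (γ₁ t)), γ₂ t - γ₁ t⟫_ℝ
        = -(∫ s in (0:ℝ)..1, F2 t s) := by
      rw [key t, inner_sub_left, inner_neg_left, inner_neg_left]; ring
    have hΔD : ⟪γ₂ t - γ₁ t, -(gradient f (γ₂ t)) - -(gradient f (γ₁ t))⟫_ℝ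
        = -(∫ s in (0:ℝ)..1, F2 t s) := by
      rw [real_inner_comm]; exact hDΔ
    refine this.congr_deriv ?_
    rw [hΔD, hDΔ]; ring
  have hIpos : ∀ t : ℝ, 0 ≤ ∫ s in (0:ℝ)..1, F2 t s := fun t =>
    intervalIntegral.integral_nonneg zero_le_one (fun s _ => hconvex t s)
  have hfun : (fun u => dist (γ₁ u) (γ₂ u))
      = fun u => Real.sqrt ⟪γ₂ u - γ₁ u, γ₂ u - γ₁ u⟫_ℝ := by
    funext u
    rw [real_inner_self_eq_norm_sq, Real.sqrt_sq (norm_nonneg _), dist_eq_norm,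
      norm_sub_rev]
  constructor
  · intro t hne
    have hΔne : γ₂ t - γ₁ t ≠ 0 := sub_ne_zero.mpr hne
    have hht : ⟪γ₂ t - γ₁ t, γ₂ t - γ₁ t⟫_ℝ ≠ 0 := by
      rw [real_inner_self_eq_norm_sq]
      exact pow_ne_zero 2 (norm_ne_zero_iff.mpr hΔne)
    have hdistpos : (0:ℝ) < dist (γ₁ t) (γ₂ t) := dist_pos.mpr (Ne.symm hne)
    have hsq : Real.sqrt ⟪γ₂ t - γ₁ t, γ₂ t - γ₁ t⟫_ℝ = dist (γ₁ t) (γ₂ t) := by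
      rw [real_inner_self_eq_norm_sq, Real.sqrt_sq (norm_nonneg _), dist_eq_norm,
        norm_sub_rev]
    have hcomp := (Real.hasDerivAt_sqrt hht).comp t (hh t)
    constructor
    · rw [hfun]
      refine hcomp.congr_deriv ?_
      rw [hsq]
      field_simp
    · have h1r : 0 ≤ 1 / dist (γ₁ t) (γ₂ t) := by positivity
      have := mul_nonneg h1r (hIpos t)
      linarith
  · rw [hfun]
    have hanti : Antitone (fun u => ⟪γ₂ u - γ₁ u, γ₂ u - γ₁ u⟫_ℝ) := by
      apply antitone_of_deriv_nonpos
      · exact fun t => (hh t).differentiableAt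
      · intro t
        rw [(hh t).deriv]
        have := hIpos t
        linarith
    exact fun a b hab => Real.sqrt_le_sqrt (hanti hab)
end
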